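/- Let K be a finite field of characteristic p and order q = p^n, and s an invertible exponent over K. The degree [Q(W_{K,s}):Q] of the field generated over Q by all the Weil sum values W_u (u ∈ K^×) equals (p−1)/gcd(p−1, s−1). Moreover, if p > 2 this common value m satisfies p ≡ 1 (mod 2m). -/

import Mathlib

/-!
Fourier inversion over `K` recovers `ψ (y ^ s)` from the values `W u`, so if `W (b * u) = W u`
for all `u` then `ψ (b ^ s * z) = ψ z` for all `z` (as `x ↦ x ^ s` is onto), and primitivity of
`ψ` gives `b ^ s = 1`. The automorphism `ζ ↦ ζ ^ a` of `ℚ(ζ)` turns `ψ x` into `ψ (a * x)`, hence,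
after substituting `x = c * y` with `c ^ s = a⁻¹`, turns `W u` into `W (a * c * u)`. So it fixes
every `W u` iff `(a * c) ^ s = 1`, i.e. `a ^ (s - 1) = 1`: under `Gal(ℚ(ζ)/ℚ) ≃ (ZMod p)ˣ` the
field of the Weil sums corresponds to the kernel of `a ↦ a ^ (s - 1)`, whose index in the cyclic
group `(ZMod p)ˣ` is `(p - 1) / gcd (p - 1) (s - 1)`. For odd `p`, `s` is prime to the even
number `q - 1`, so `2` divides both `p - 1` and `s - 1`, hence their gcd.
-/

open IntermediateField Polynomial

lemma FiniteField.pow_surjective_of_coprime {K : Type*} [Field K] [Fintype K] {s : ℕ}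
    (hs : 0 < s) (hcop : s.Coprime (Fintype.card K - 1)) :
    Function.Surjective fun x : K => x ^ s := by
  have hunits : (Nat.card Kˣ).Coprime s := by
    rw [Nat.card_units, Nat.card_eq_fintype_card]
    exact hcop.symm
  intro y
  rcases eq_or_ne y 0 with rfl | hy
  · exact ⟨0, zero_pow hs.ne'⟩
  · obtain ⟨x, hx⟩ := (powCoprime hunits).surjective (Units.mk0 y hy)
    exact ⟨x, by simpa using congrArg Units.val hx⟩

lemma IntermediateField.mem_fixingSubgroup_adjoin_iff {F E : Type*} [Field F] [Field E]
    [Algebra F E] {S : Set E} {σ : E ≃ₐ[F] E} :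
    σ ∈ (adjoin F S).fixingSubgroup ↔ ∀ x ∈ S, σ x = x := by
  rw [mem_fixingSubgroup_iff]
  refine ⟨fun h x hx => h x (subset_adjoin F S hx), fun h x hx => ?_⟩
  induction hx using adjoin_induction with
  | mem x hx => exact h x hx
  | algebraMap x => exact σ.commutes x
  | add x y _ _ hx hy => rw [map_add, hx, hy]
  | inv x _ hx => rw [map_inv₀, hx]
  | mul x y _ _ hx hy => rw [map_mul, hx, hy]

lemma IntermediateField.finrank_adjoin_range_coe {F L : Type*} [Field F] [Field L] [Algebra F L]
    (E : IntermediateField F L) {ι : Type*} (f : ι → E) :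
    Module.finrank F (adjoin F (Set.range fun i => (f i : L))) =
      Module.finrank F (adjoin F (Set.range f)) := by
  rw [show Set.range (fun i => (f i : L)) = E.val '' Set.range f from Set.range_comp _ _,
    ← adjoin_map]
  exact ((adjoin F (Set.range f)).equivMap E.val).toLinearEquiv.finrank_eq.symm

lemma IsPrimitiveRoot.isCyclotomicExtension_adjoin_simple {F L : Type*} [Field F] [Field L]
    [Algebra F L] {n : ℕ} [NeZero n] {ζ : L} (hζ : IsPrimitiveRoot ζ n) :
    IsCyclotomicExtension {n} F F⟮ζ⟯ := by
  have hint : IsIntegral F ζ := (hζ.isIntegral (NeZero.pos n)).tower_top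
  change IsCyclotomicExtension {n} F F⟮ζ⟯.toSubalgebra
  rw [adjoin_simple_toSubalgebra_of_isAlgebraic hint.isAlgebraic]
  exact hζ.adjoin_isCyclotomicExtension F

lemma IsPrimitiveRoot.autToPow_surjective {F E : Type*} [Field F] [Field E] [Algebra F E]
    {n : ℕ} [NeZero n] [IsCyclotomicExtension {n} F E] (hirr : Irreducible (cyclotomic n F))
    {ζ : E} (hζ : IsPrimitiveRoot ζ n) : Function.Surjective (hζ.autToPow F) := by
  have := IsCyclotomicExtension.isGalois {n} F E
  have := IsCyclotomicExtension.finiteDimensional {n} F E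
  refine ((hζ.autToPow_injective F).bijective_of_nat_card_le ?_).2
  rw [IsGalois.card_aut_eq_finrank, IsCyclotomicExtension.finrank E hirr,
    Nat.card_eq_fintype_card, ZMod.card_units_eq_totient]

section WeilSum

variable {K R : Type*} [Field K] [Fintype K] [CommRing R]

def weilSum (ψ : AddChar K R) (s : ℕ) (u : K) : R :=
  ∑ x, ψ (x ^ s - u * x)

lemma map_weilSum {R' : Type*} [CommRing R'] (f : R →+* R') (ψ : AddChar K R) (s : ℕ) (u : K) :
    f (weilSum ψ s u) = weilSum ((f : R →* R').compAddChar ψ) s u := by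
  simp [weilSum, map_sum]

lemma weilSum_mulShift (ψ : AddChar K R) (s : ℕ) {a c : K} (hc : c ≠ 0) (hac : a * c ^ s = 1)
    (u : K) : weilSum (ψ.mulShift a) s u = weilSum ψ s (a * c * u) := by
  refine (Fintype.sum_bijective (c * ·) (mulLeft_bijective₀ c hc) _ _ fun y => ?_).symm
  rw [AddChar.mulShift_apply]
  congr 1
  linear_combination (-y ^ s) * hac

variable [IsDomain R] {ψ : AddChar K R} {s : ℕ}

lemma sum_weilSum_mul (hψ : ψ.IsPrimitive) (y : K) :
    ∑ u, weilSum ψ s u * ψ (u * y) = Fintype.card K • ψ (y ^ s) := by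
  classical
  calc ∑ u, weilSum ψ s u * ψ (u * y)
      = ∑ x, ψ (x ^ s) * ∑ u, ψ (u * (y - x)) := by
        simp only [weilSum, Finset.sum_mul, Finset.mul_sum]
        rw [Finset.sum_comm]
        refine Finset.sum_congr rfl fun x _ => Finset.sum_congr rfl fun u _ => ?_
        rw [← AddChar.map_add_eq_mul, ← AddChar.map_add_eq_mul]
        ring_nf
    _ = Fintype.card K • ψ (y ^ s) := by
        simp [AddChar.sum_mulShift _ hψ, sub_eq_zero, mul_comm]

lemma pow_eq_one_of_weilSum_mul_eq [CharZero R] (hψ : ψ.IsPrimitive)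
    (hs : Function.Surjective fun x : K => x ^ s) {b : K} (hb : b ≠ 0)
    (h : ∀ u, weilSum ψ s (b * u) = weilSum ψ s u) : b ^ s = 1 := by
  have hpow : ∀ y, ψ ((b * y) ^ s) = ψ (y ^ s) := by
    intro y
    apply nsmul_right_injective (M := R) (Fintype.card_ne_zero (α := K))
    simp only
    rw [← sum_weilSum_mul hψ, ← sum_weilSum_mul hψ]
    refine Fintype.sum_bijective (b * ·) (mulLeft_bijective₀ b hb) _ _ fun u => ?_
    rw [h, mul_left_comm u b y, mul_assoc]
  have hshift : ψ.mulShift (b ^ s - 1) = 1 := by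
    ext z
    obtain ⟨y, rfl⟩ := hs z
    have := hpow y
    rw [mul_pow, ← sub_add_cancel (b ^ s) 1, add_mul, one_mul, AddChar.map_add_eq_mul,
      (ψ.val_isUnit _).mul_eq_right] at this
    simpa using this
  by_contra hbs
  exact hψ (sub_ne_zero.mpr hbs) hshift

lemma weilSum_mulShift_eq_iff [CharZero R] (hψ : ψ.IsPrimitive)
    (hs : Function.Surjective fun x : K => x ^ s) {a : K} (ha : a ≠ 0) :
    (∀ u : Kˣ, weilSum (ψ.mulShift a) s u = weilSum ψ s u) ↔ a ^ (s - 1) = 1 := by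
  have hs0 : s ≠ 0 := by
    rintro rfl
    obtain ⟨x, hx⟩ := hs 0
    simp at hx
  obtain ⟨c, hc⟩ : ∃ c, c ^ s = a⁻¹ := hs a⁻¹
  have hc0 : c ≠ 0 := by
    rintro rfl
    rw [zero_pow hs0] at hc
    exact ha (inv_eq_zero.mp hc.symm)
  have hac : a * c ^ s = 1 := by rw [hc, mul_inv_cancel₀ ha]
  rw [← mul_eq_right₀ ha, ← pow_succ, Nat.sub_add_cancel (Nat.one_le_iff_ne_zero.mpr hs0)]
  constructor
  · intro h
    have hW : ∀ u, weilSum ψ s (a * c * u) = weilSum ψ s u := by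
      intro u
      rcases eq_or_ne u 0 with rfl | hu
      · simp
      · rw [← weilSum_mulShift ψ s hc0 hac]
        exact h (Units.mk0 u hu)
    have := pow_eq_one_of_weilSum_mul_eq hψ hs (mul_ne_zero ha hc0) hW
    rwa [mul_pow, hc, mul_inv_eq_one₀ ha] at this
  · intro h u
    rw [weilSum_mulShift ψ s (inv_ne_zero ha) (by rw [inv_pow, h, mul_inv_cancel₀ ha]),
      mul_inv_cancel₀ ha, one_mul]

end WeilSum

section TraceChar

variable (K : Type*) {R : Type*} [Field K] [CommMonoid R] {p : ℕ} [Fact p.Prime]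
  [Algebra (ZMod p) K]

noncomputable def traceChar {ζ : R} (hζ : ζ ^ p = 1) : AddChar K R :=
  (AddChar.zmodChar p hζ).compAddMonoidHom (Algebra.trace (ZMod p) K).toAddMonoidHom

lemma traceChar_apply {ζ : R} (hζ : ζ ^ p = 1) (x : K) :
    traceChar K hζ x = ζ ^ (Algebra.trace (ZMod p) K x).val :=
  rfl

lemma isPrimitive_traceChar [Finite K] {ζ : R} (hζ : IsPrimitiveRoot ζ p) :
    (traceChar K hζ.pow_eq_one).IsPrimitive := by
  refine AddChar.IsPrimitive.of_ne_one (AddChar.ne_one_iff.2 ?_)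
  obtain ⟨x, hx⟩ := DFunLike.ne_iff.mp (Algebra.trace_ne_zero (ZMod p) K)
  exact ⟨x, ((AddChar.zmodChar_primitive_of_primitive_root p hζ).zmod_char_eq_one_iff p _).not.mpr
    hx⟩

lemma compAddChar_traceChar {R' : Type*} [CommMonoid R'] (f : R →* R') {ζ : R} {ζ' : R'}
    (hζ : ζ ^ p = 1) (hζ' : ζ' ^ p = 1) (hf : f ζ = ζ') :
    f.compAddChar (traceChar K hζ) = traceChar K hζ' := by
  ext x
  simp [traceChar_apply, hf]

lemma traceChar_eq_mulShift {ζ ζ' : R} (hζ : ζ ^ p = 1) (hζ' : ζ' ^ p = 1) {a : ZMod p}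
    (ha : ζ' = ζ ^ a.val) :
    traceChar K hζ' = (traceChar K hζ).mulShift (algebraMap (ZMod p) K a) := by
  ext x
  rw [AddChar.mulShift_apply, traceChar_apply, traceChar_apply, ← Algebra.smul_def, map_smul,
    smul_eq_mul, ZMod.val_mul, ← pow_eq_pow_mod _ hζ, ha, ← pow_mul]

end TraceChar

section Galois

variable {K : Type*} [Field K] [Fintype K] {p : ℕ} [Fact p.Prime] [Algebra (ZMod p) K]
  {s : ℕ}

lemma fixingSubgroup_adjoin_weilSum {E : Type*} [Field E] [Algebra ℚ E] {ζ : E}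
    (hζ : IsPrimitiveRoot ζ p) (hs : Function.Surjective fun x : K => x ^ s) :
    (adjoin ℚ (Set.range fun u : Kˣ => weilSum (traceChar K hζ.pow_eq_one) s u)).fixingSubgroup
      = (powMonoidHom (s - 1)).ker.comap (hζ.autToPow ℚ) := by
  ext σ
  set ψ := traceChar K hζ.pow_eq_one
  set a := hζ.autToPow ℚ σ
  have hσψ : (σ : E →* E).compAddChar ψ = ψ.mulShift (algebraMap (ZMod p) K a) := by
    rw [compAddChar_traceChar K (σ : E →* E) hζ.pow_eq_one
      (hζ.map_of_injective σ.injective).pow_eq_one rfl]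
    exact traceChar_eq_mulShift K _ _ (hζ.autToPow_spec ℚ σ).symm
  have hσW (u : K) : σ (weilSum ψ s u) = weilSum (ψ.mulShift (algebraMap (ZMod p) K a)) s u := by
    rw [← hσψ]
    exact map_weilSum (σ : E →+* E) ψ s u
  have := algebraRat.charZero E
  simp only [mem_fixingSubgroup_adjoin_iff, Set.forall_mem_range, hσW, Subgroup.mem_comap,
    MonoidHom.mem_ker, powMonoidHom_apply]
  rw [weilSum_mulShift_eq_iff (isPrimitive_traceChar K hζ) hs (by simp), ← map_pow,
    map_eq_one_iff _ (algebraMap (ZMod p) K).injective, ← Units.val_pow_eq_pow_val,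
    Units.val_eq_one]

theorem finrank_adjoin_weilSum_of_isCyclotomicExtension {E : Type*} [Field E] [Algebra ℚ E]
    [IsCyclotomicExtension {p} ℚ E] {ζ : E} (hζ : IsPrimitiveRoot ζ p)
    (hs : Function.Surjective fun x : K => x ^ s) :
    Module.finrank ℚ (adjoin ℚ (Set.range fun u : Kˣ => weilSum (traceChar K hζ.pow_eq_one) s u))
      = (p - 1) / (p - 1).gcd (s - 1) := by
  have := IsCyclotomicExtension.isGalois {p} ℚ E
  rw [finrank_eq_fixingSubgroup_index, fixingSubgroup_adjoin_weilSum hζ hs,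
    Subgroup.index_comap_of_surjective _
      (hζ.autToPow_surjective (cyclotomic.irreducible_rat (NeZero.pos p))),
    IsCyclic.index_powMonoidHom_ker, Nat.card_eq_fintype_card, ZMod.card_units]

theorem finrank_adjoin_weilSum {L : Type*} [Field L] [Algebra ℚ L] {ζ : L}
    (hζ : IsPrimitiveRoot ζ p) (hs : Function.Surjective fun x : K => x ^ s) :
    Module.finrank ℚ (adjoin ℚ (Set.range fun u : Kˣ => weilSum (traceChar K hζ.pow_eq_one) s u))
      = (p - 1) / (p - 1).gcd (s - 1) := by
  have := hζ.isCyclotomicExtension_adjoin_simple (F := ℚ)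
  have hζE : IsPrimitiveRoot (AdjoinSimple.gen ℚ ζ) p :=
    IsPrimitiveRoot.coe_submonoidClass_iff.mp hζ
  have hval : (fun u : Kˣ => weilSum (traceChar K hζ.pow_eq_one) s u) =
      fun u : Kˣ => ((weilSum (traceChar K hζE.pow_eq_one) s u : ℚ⟮ζ⟯) : L) := by
    ext u
    rw [← IntermediateField.algebraMap_apply, map_weilSum,
      compAddChar_traceChar K _ _ hζ.pow_eq_one rfl]
  rw [hval]
  -- `finrank_adjoin_range_coe` yields the `ℚ`-algebra structure of `ℚ⟮ζ⟯` as a subfield of `L`,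
  -- not the one found by instance search (`DivisionRing.toRatAlgebra`)
  let _ : Algebra ℚ ℚ⟮ζ⟯ := ℚ⟮ζ⟯.algebra'
  rw [finrank_adjoin_range_coe, finrank_adjoin_weilSum_of_isCyclotomicExtension hζE hs]

end Galois

lemma Nat.modEq_one_two_mul_div_gcd {p q s : ℕ} (hp : Odd p) (hq : Odd q)
    (hs : s.Coprime (q - 1)) : p ≡ 1 [MOD 2 * ((p - 1) / (p - 1).gcd (s - 1))] := by
  have h2p : 2 ∣ p - 1 := (Nat.Odd.sub_odd hp odd_one).two_dvd
  have h2q : 2 ∣ q - 1 := (Nat.Odd.sub_odd hq odd_one).two_dvd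
  have h2s : 2 ∣ s - 1 := by
    have : ¬ 2 ∣ s := fun h => by simpa [hs] using Nat.dvd_gcd h h2q
    omega
  refine ((Nat.modEq_iff_dvd' hp.pos).mpr ?_).symm
  calc 2 * ((p - 1) / (p - 1).gcd (s - 1))
      ∣ (p - 1).gcd (s - 1) * ((p - 1) / (p - 1).gcd (s - 1)) :=
        Nat.mul_dvd_mul_right (Nat.dvd_gcd h2p h2s) _
    _ = p - 1 := Nat.mul_div_cancel' (Nat.gcd_dvd_left _ _)

theorem stmt_16_general (p n s : ℕ) (hp : p.Prime)
    (K : Type*) [Field K] [Fintype K] [Algebra (ZMod p) K]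
    (hcard : Fintype.card K = p ^ n)
    (hs : 0 < s) (hgcd : Nat.Coprime s (p ^ n - 1))
    (ζ : ℂ) (hζ : ζ = Complex.exp (2 * Real.pi * Complex.I / p))
    (ψ : K → ℂ) (hψ : ∀ x, ψ x = ζ ^ (Algebra.trace (ZMod p) K x).val)
    (W : K → ℂ) (hW : ∀ u, W u = ∑ x : K, ψ (x ^ s - u * x)) :
    Module.finrank ℚ
        (IntermediateField.adjoin ℚ (Set.range fun u : Kˣ => W (u : K)))
      = (p - 1) / Nat.gcd (p - 1) (s - 1)
    ∧ (2 < p → p ≡ 1 [MOD 2 * ((p - 1) / Nat.gcd (p - 1) (s - 1))]) := by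
  have : Fact p.Prime := ⟨hp⟩
  have hζp : IsPrimitiveRoot ζ p := hζ ▸ Complex.isPrimitiveRoot_exp p hp.ne_zero
  have hWeq : W = weilSum (traceChar K hζp.pow_eq_one) s := by
    ext u
    simp only [hW, hψ, weilSum, traceChar_apply]
  have hsurj := FiniteField.pow_surjective_of_coprime hs (hcard ▸ hgcd)
  refine ⟨hWeq ▸ finrank_adjoin_weilSum hζp hsurj, fun hp2 => ?_⟩
  have hodd : Odd p := hp.odd_of_ne_two hp2.ne'
  exact Nat.modEq_one_two_mul_div_gcd hodd hodd.pow hgcd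

/-- The degree over `ℚ` of the field generated by all Weil sum values equals
`(p−1)/gcd(p−1, s−1)`; moreover for `p > 2` this value `m` satisfies
`p ≡ 1 (mod 2m)`. -/
theorem stmt_16 (p n s : ℕ) (hp : p.Prime) (hn : 0 < n)
    (K : Type*) [Field K] [Fintype K] [DecidableEq K] [CharP K p] [Algebra (ZMod p) K]
    (hcard : Fintype.card K = p ^ n)
    (hs : 0 < s) (hgcd : Nat.Coprime s (p ^ n - 1))
    (ζ : ℂ) (hζ : ζ = Complex.exp (2 * Real.pi * Complex.I / p))
    (ψ : K → ℂ) (hψ : ∀ x, ψ x = ζ ^ (Algebra.trace (ZMod p) K x).val)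
    (W : K → ℂ) (hW : ∀ u, W u = ∑ x : K, ψ (x ^ s - u * x)) :
    Module.finrank ℚ
        (IntermediateField.adjoin ℚ (Set.range fun u : Kˣ => W (u : K)))
      = (p - 1) / Nat.gcd (p - 1) (s - 1)
    ∧ (2 < p → p ≡ 1 [MOD 2 * ((p - 1) / Nat.gcd (p - 1) (s - 1))]) :=
  stmt_16_general p n s hp K hcard hs hgcd ζ hζ ψ hψ W hW
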